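/- Let S be a finite multiset of pairs (i, d) of positive integers, and let ν > 0 be real. Define N₁(ν) = Σ_{(i,d)∈S} #{m ∈ S_d : m/2 + iν = 1} and N₀(ν) = Σ_{(i,d)∈S} #{m ∈ S_d : m/2 + iν = 0}, where S_d = {d-1, d-3, ..., 1-d}. Then N₁(ν) = N₀(ν) if and only if ν ∉ {(d+1)/(2i) : (i,d) ∈ S}, and otherwise N₁(ν) > N₀(ν). -/

import Mathlib

open Classical in
private lemma bind_pure_cast (s : Finset ℕ) :
    (s >>= fun a => pure ((a : ℝ))) = Finset.image (fun a : ℕ => (a : ℝ)) s :=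
  Finset.sup_singleton_apply s _

open Classical in
private lemma card_red (d : ℕ) (p : ℝ → Prop) :
    (((Finset.range d) >>= fun a => pure ((a : ℝ))).filter p).card
      = ((Finset.range d).filter (fun j : ℕ => p (j : ℝ))).card := by
  rw [bind_pure_cast, Finset.filter_image,
    Finset.card_image_of_injective _ Nat.cast_injective]

open Classical in
private lemma key (i d : ℕ) (hi : 1 ≤ i) (hd : 1 ≤ d) (ν : ℝ) (hν : 0 < ν) :
    ((Finset.range d).filter
        (fun j : ℕ => ((d : ℝ) - 1 - 2 * (j : ℝ)) / 2 + (i : ℝ) * ν = 1)).card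
      = ((Finset.range d).filter
        (fun j : ℕ => ((d : ℝ) - 1 - 2 * (j : ℝ)) / 2 + (i : ℝ) * ν = 0)).card
        + (if ν = ((d : ℝ) + 1) / (2 * i) then 1 else 0) := by
  have hi0 : (0 : ℝ) < i := by exact_mod_cast hi
  set S1 := (Finset.range d).filter
      (fun j : ℕ => ((d : ℝ) - 1 - 2 * (j : ℝ)) / 2 + (i : ℝ) * ν = 1) with hS1
  set S0 := (Finset.range d).filter
      (fun j : ℕ => ((d : ℝ) - 1 - 2 * (j : ℝ)) / 2 + (i : ℝ) * ν = 0) with hS0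
  have hsplit : (S1.filter (fun j => ¬ j = d - 1)).card
      + (S1.filter (fun j => j = d - 1)).card = S1.card := by
    rw [add_comm]
    exact Finset.card_filter_add_card_filter_not _
  have hd1 : S1.filter (fun j => j = d - 1) = if d - 1 ∈ S1 then {d - 1} else ∅ :=
    Finset.filter_eq' S1 (d - 1)
  have hcast : ((d - 1 : ℕ) : ℝ) = (d : ℝ) - 1 := by
    push_cast [hd]; ring
  have hmem : d - 1 ∈ S1 ↔ ν = ((d : ℝ) + 1) / (2 * i) := by
    rw [hS1, Finset.mem_filter, Finset.mem_range]
    constructor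
    · rintro ⟨-, h⟩
      rw [hcast] at h
      field_simp
      linarith
    · intro h
      refine ⟨by omega, ?_⟩
      rw [hcast, h]
      field_simp
      ring
  have hcard1 : (S1.filter (fun j => j = d - 1)).card
      = (if ν = ((d : ℝ) + 1) / (2 * i) then 1 else 0) := by
    rw [hd1]
    by_cases h : ν = ((d : ℝ) + 1) / (2 * i)
    · rw [if_pos (hmem.mpr h), if_pos h]; simp
    · rw [if_neg (fun hm => h (hmem.mp hm)), if_neg h]; simp
  have himg : S0 = (S1.filter (fun j => ¬ j = d - 1)).image Nat.succ := by
    ext j'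
    simp only [hS0, hS1, Finset.mem_image, Finset.mem_filter, Finset.mem_range]
    constructor
    · rintro ⟨hj', h0⟩
      have hj'1 : 1 ≤ j' := by
        by_contra hc
        have : j' = 0 := by omega
        subst this
        simp only [Nat.cast_zero] at h0
        nlinarith
      refine ⟨j' - 1, ⟨⟨by omega, ?_⟩, by omega⟩, by omega⟩
      have : ((j' - 1 : ℕ) : ℝ) = (j' : ℝ) - 1 := by push_cast [hj'1]; ring
      rw [this]
      linarith
    · rintro ⟨j, ⟨⟨hj, h1⟩, hne⟩, rfl⟩
      have hjlt : j < d - 1 := by omega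
      refine ⟨by omega, ?_⟩
      push_cast
      linarith
  have hinj : Function.Injective Nat.succ := fun a b h => by omega
  have hcard0 : S0.card = (S1.filter (fun j => ¬ j = d - 1)).card := by
    rw [himg, Finset.card_image_of_injective _ hinj]
  omega


open Classical in
/-- For a finite multiset `S` of pairs `(i,d)` of positive integers and `ν > 0`,
with `N₁(ν) = Σ_{(i,d)∈S} #{m ∈ S_d : m/2 + iν = 1}` and
`N₀(ν) = Σ_{(i,d)∈S} #{m ∈ S_d : m/2 + iν = 0}` (where `S_d = {d-1, d-3, ..., 1-d}`,
element `d - 1 - 2j` for `j < d`): `N₁(ν) = N₀(ν)` iff `ν ∉ {(d+1)/(2i) : (i,d) ∈ S}`,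
and otherwise `N₁(ν) > N₀(ν)`. -/
theorem stmt_2 (S : Multiset (ℕ × ℕ)) (hS : ∀ p ∈ S, 1 ≤ p.1 ∧ 1 ≤ p.2)
    (ν : ℝ) (hν : 0 < ν) :
    ((S.map (fun p => ((Finset.range p.2).filter
          (fun j => ((p.2 : ℝ) - 1 - 2 * j) / 2 + (p.1 : ℝ) * ν = 1)).card)).sum
        = (S.map (fun p => ((Finset.range p.2).filter
          (fun j => ((p.2 : ℝ) - 1 - 2 * j) / 2 + (p.1 : ℝ) * ν = 0)).card)).sum
      ↔ ¬ ∃ p ∈ S, ν = ((p.2 : ℝ) + 1) / (2 * p.1)) ∧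
    ((∃ p ∈ S, ν = ((p.2 : ℝ) + 1) / (2 * p.1)) →
      (S.map (fun p => ((Finset.range p.2).filter
          (fun j => ((p.2 : ℝ) - 1 - 2 * j) / 2 + (p.1 : ℝ) * ν = 0)).card)).sum
        < (S.map (fun p => ((Finset.range p.2).filter
          (fun j => ((p.2 : ℝ) - 1 - 2 * j) / 2 + (p.1 : ℝ) * ν = 1)).card)).sum) := by
  simp only [card_red]
  have hmap : S.map (fun p => ((Finset.range p.2).filter
        (fun j : ℕ => ((p.2 : ℝ) - 1 - 2 * (j : ℝ)) / 2 + (p.1 : ℝ) * ν = 1)).card)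
      = S.map (fun p => ((Finset.range p.2).filter
        (fun j : ℕ => ((p.2 : ℝ) - 1 - 2 * (j : ℝ)) / 2 + (p.1 : ℝ) * ν = 0)).card
        + (if ν = ((p.2 : ℝ) + 1) / (2 * p.1) then 1 else 0)) := by
    apply Multiset.map_congr rfl
    intro p hp
    exact key p.1 p.2 (hS p hp).1 (hS p hp).2 ν hν
  rw [hmap, Multiset.sum_map_add]
  have hzero : ((S.map (fun p => if ν = ((p.2 : ℝ) + 1) / (2 * p.1) then 1 else 0)).sum = 0)
      ↔ ¬ ∃ p ∈ S, ν = ((p.2 : ℝ) + 1) / (2 * p.1) := by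
    rw [Multiset.sum_eq_zero_iff]
    constructor
    · rintro h ⟨p, hp, hcrit⟩
      have := h _ (Multiset.mem_map_of_mem _ hp)
      rw [if_pos hcrit] at this
      exact one_ne_zero this
    · intro h x hx
      rcases Multiset.mem_map.mp hx with ⟨p, hp, rfl⟩
      rw [if_neg (fun hc => h ⟨p, hp, hc⟩)]
  constructor
  · rw [← hzero]
    omega
  · rintro ⟨p, hp, hcrit⟩
    have hpos : 0 < (S.map (fun p => if ν = ((p.2 : ℝ) + 1) / (2 * p.1) then 1 else 0)).sum := by
      by_contra h
      have h0 : (S.map (fun p => if ν = ((p.2 : ℝ) + 1) / (2 * p.1) then 1 else 0)).sum = 0 := by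
        omega
      exact hzero.mp h0 ⟨p, hp, hcrit⟩
    omega
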